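/- Let b ≥ 2 be an integer, d ≥ 1, s ≥ 1, and let {x_0,…,x_{b^m−1}} ⊂ [0,1)^{ds} be a (t,m,ds)-net in base b. Then {𝒟_d(x_0),…,𝒟_d(x_{b^m−1})} ⊂ [0,1)^s is a (t,m,s)-net in base b. -/

import Mathlib

open MeasureTheory Set

noncomputable section

namespace Paper

/-- The `i`-th base-`b` digit of `x ∈ [0,1)` (for `i ≥ 1`), using the expansion in which
infinitely many digits differ from `b-1` (i.e. the floor-based expansion). -/
def bdigit (b : ℕ) (x : ℝ) (i : ℕ) : ℕ := (⌊x * (b : ℝ) ^ i⌋).toNat % b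

/-- A `b`-adic rational in `[0,1)`: a number with a finite base-`b` expansion. -/
def IsBadicRational (b : ℕ) (x : ℝ) : Prop := ∃ (n k : ℕ), x = (n : ℝ) / (b : ℝ) ^ k

/-- The `k`-th Walsh function in base `b`. -/
def wal (b k : ℕ) (x : ℝ) : ℂ :=
  Complex.exp (2 * Real.pi * Complex.I / b) ^
    (∑ j ∈ Finset.range k, bdigit b x (j + 1) * (k / b ^ j % b))

/-- The multidimensional Walsh function. -/
def walV (b s : ℕ) (k : Fin s → ℕ) (x : Fin s → ℝ) : ℂ := ∏ j, wal b (k j) (x j)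

/-- Digitwise addition modulo `b` of nonnegative integers. -/
def baddN (b k l : ℕ) : ℕ :=
  ∑ j ∈ Finset.range (k + l), ((k / b ^ j % b + l / b ^ j % b) % b) * b ^ j

/-- Digitwise addition modulo `b` on `[0,1)`. -/
def baddR (b : ℕ) (x y : ℝ) : ℝ :=
  ∑' i : ℕ, (((bdigit b x (i + 1) + bdigit b y (i + 1)) % b : ℕ) : ℝ) / (b : ℝ) ^ (i + 1)

/-- Digitwise subtraction modulo `b` on `[0,1)`. -/
def bsubR (b : ℕ) (x y : ℝ) : ℝ :=
  ∑' i : ℕ, (((bdigit b x (i + 1) + (b - bdigit b y (i + 1))) % b : ℕ) : ℝ) / (b : ℝ) ^ (i + 1)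

/-- The unit box `[0,1)^s`. -/
def unitBox (s : ℕ) : Set (Fin s → ℝ) := Set.univ.pi fun _ => Set.Ico (0 : ℝ) 1

/-- The closed unit cube `[0,1]^s`. -/
def unitCube (s : ℕ) : Set (Fin s → ℝ) := Set.univ.pi fun _ => Set.Icc (0 : ℝ) 1

/-- The digit interlacing function `𝒟_d : [0,1)^d → [0,1)`. -/
def interlaceR (b d : ℕ) (x : Fin d → ℝ) : ℝ :=
  ∑' a : ℕ, ∑ r : Fin d, (bdigit b (x r) (a + 1) : ℝ) / (b : ℝ) ^ ((r : ℕ) + 1 + a * d)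

/-- The digit interlacing function on nonnegative integers. -/
def interlaceN (b d : ℕ) (k : Fin d → ℕ) : ℕ :=
  ∑ r : Fin d, ∑ a ∈ Finset.range (k r), (k r / b ^ a % b) * b ^ ((r : ℕ) + a * d)

/-- The index of position `r` of block `i` inside `Fin (d*s)`. -/
def embIdx (d s : ℕ) (i : Fin s) (r : Fin d) : Fin (d * s) :=
  ⟨(i : ℕ) * d + (r : ℕ), by
    calc (i : ℕ) * d + (r : ℕ) < (i : ℕ) * d + d := by have := r.2; omega
      _ = ((i : ℕ) + 1) * d := (Nat.succ_mul _ _).symm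
      _ ≤ s * d := Nat.mul_le_mul_right d i.2
      _ = d * s := Nat.mul_comm s d⟩

/-- Blockwise digit interlacing `𝒟_d : [0,1)^{ds} → [0,1)^s`. -/
def interlaceB (b d s : ℕ) (x : Fin (d * s) → ℝ) : Fin s → ℝ :=
  fun i => interlaceR b d fun r => x (embIdx d s i r)

/-- Blockwise digit interlacing on integer vectors, `ℕ₀^{ds} → ℕ₀^s`. -/
def interlaceBN (b d s : ℕ) (k : Fin (d * s) → ℕ) : Fin s → ℕ :=
  fun i => interlaceN b d fun r => k (embIdx d s i r)

/-- `P` is a `(t,m,s)`-net in base `b`. -/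
def IsNet (b m s t : ℕ) (P : Fin (b ^ m) → Fin s → ℝ) : Prop :=
  ∀ dv : Fin s → ℕ, ∑ i, dv i ≤ m - t →
    ∀ av : Fin s → ℕ, (∀ i, av i < b ^ dv i) →
      (Finset.univ.filter fun n =>
        ∀ i, P n i ∈ Set.Ico ((av i : ℝ) / (b : ℝ) ^ dv i) (((av i : ℝ) + 1) / (b : ℝ) ^ dv i)).card
        = b ^ (m - ∑ i, dv i)

/-- `P` is a digital net over `ℤ_b` generated by `m × m` matrices `C_1, …, C_s`. -/
def IsDigitalNet (b m s : ℕ) (P : Fin (b ^ m) → Fin s → ℝ) : Prop :=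
  ∃ C : Fin s → Matrix (Fin m) (Fin m) (ZMod b),
    ∀ n : Fin (b ^ m), ∀ i : Fin s,
      P n i = ∑ j : Fin m,
        (((C i).mulVec fun r : Fin m => (((n : ℕ) / b ^ (r : ℕ) % b : ℕ) : ZMod b)) j).val
          / (b : ℝ) ^ ((j : ℕ) + 1)

/-- One-dimensional finite difference `Δ_α(x; z_1,…,z_α) f`. -/
def fdiff (f : ℝ → ℝ) (α : ℕ) (x : ℝ) (z : Fin α → ℝ) : ℝ :=
  ∑ v : Finset (Fin α), (-1 : ℝ) ^ v.card * f (x + ∑ i ∈ v, z i)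

/-- Multidimensional finite difference `Δ_𝛂(x; z_1,…,z_s) f`. -/
def fdiffV (s : ℕ) (f : (Fin s → ℝ) → ℝ) (αv : Fin s → ℕ) (x : Fin s → ℝ)
    (z : (i : Fin s) → Fin (αv i) → ℝ) : ℝ :=
  ∑ v : (i : Fin s) → Finset (Fin (αv i)),
    (-1 : ℝ) ^ (∑ i, (v i).card) * f fun i => x i + ∑ r ∈ v i, z i r

/-- Apply a permutation of `{0,…,b-1}` to a natural number `< b`. -/
def applyPerm (b : ℕ) (π : Equiv.Perm (Fin b)) (n : ℕ) : ℕ :=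
  if h : n < b then (π ⟨n, h⟩ : Fin b) else n

/-- The list of the first `k` base-`b` digits of `x`. -/
def digitList (b : ℕ) (x : ℝ) (k : ℕ) : List ℕ :=
  (List.range k).map fun j => bdigit b x (j + 1)

/-- Owen's scrambling of `x ∈ [0,1)` by the family `F` of permutations (indexed by
digit prefixes): the `k`-th digit `ξ_k` is replaced by `π_{ξ_1,…,ξ_{k-1}}(ξ_k)`. -/
def scrambleR (b : ℕ) (F : List ℕ → Equiv.Perm (Fin b)) (x : ℝ) : ℝ :=
  ∑' k : ℕ, (applyPerm b (F (digitList b x k)) (bdigit b x (k + 1)) : ℝ) / (b : ℝ) ^ (k + 1)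

/-- `sc` is a random Owen scrambling: a random family of permutations of `{0,…,b-1}`,
one for each of the `D` coordinates and each digit prefix, all chosen independently
and uniformly at random. -/
def IsUniformScrambling {Ω : Type*} [MeasurableSpace Ω] (μ : Measure Ω) (b D : ℕ)
    (sc : Ω → Fin D → List ℕ → Equiv.Perm (Fin b)) : Prop :=
  letI : MeasurableSpace (Equiv.Perm (Fin b)) := ⊤
  (∀ i l, Measurable fun ω => sc ω i l) ∧
    ProbabilityTheory.iIndepFun (m := fun _ : Fin D × List ℕ => (⊤ : MeasurableSpace (Equiv.Perm (Fin b))))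
      (fun p : Fin D × List ℕ => fun ω => sc ω p.1 p.2) μ ∧
    ∀ i l π, μ {ω | sc ω i l = π} = ((b.factorial : ENNReal))⁻¹

/-- `k` belongs to the digit box determined by `l`: `⌊b^{l-1}⌋ ≤ k < b^l`. -/
def inBl (b l k : ℕ) : Prop := b ^ l / b ≤ k ∧ k < b ^ l

/-- `k_r`: the part of `k` supported on base-`b` digits at positions `≡ r (mod d)`. -/
def kpart (b d k r : ℕ) : ℕ :=
  ∑ j ∈ Finset.range k, if j % d = r then (k / b ^ j % b) * b ^ j else 0

/-- The digits of `x` and `x'` in the arithmetic progression of positions `r, r+d, r+2d, …`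
(0-indexed; digit position `r + j·d` is the `(r+1+j·d)`-th digit) agree for `j' < j` and
differ at `j`; i.e. `β_r + 1 = j`. -/
def firstDiffAt (b d : ℕ) (x x' : ℝ) (r j : ℕ) : Prop :=
  (∀ j' < j, bdigit b x (r + 1 + j' * d) = bdigit b x' (r + 1 + j' * d)) ∧
    bdigit b x (r + 1 + j * d) ≠ bdigit b x' (r + 1 + j * d)

/-- The Walsh coefficient `f̂(k)` of `f : [0,1]^s → ℝ`. -/
def fhat (b s : ℕ) (f : (Fin s → ℝ) → ℝ) (k : Fin s → ℕ) : ℂ :=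
  ∫ x in unitBox s, (f x : ℂ) * (starRingEnd ℂ) (walV b s k x)

/-- `σ²_{d,ℓ,s}(f) = Σ_{k ∈ B_{d,ℓ,s}} |f̂(𝒟_d(k))|²`. -/
def sigmaSq (b d s : ℕ) (ℓ : Fin (d * s) → ℕ) (f : (Fin s → ℝ) → ℝ) : ℝ :=
  ∑ k ∈ Fintype.piFinset (fun j => Finset.Ico (b ^ ℓ j / b) (b ^ ℓ j)),
    ‖fhat b s f (interlaceBN b d s k)‖ ^ 2

/-- The gain coefficient `Γ_{d,ℓ}(P)` of order `d`, computed with a representative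
`k ∈ B_{d,ℓ,s}`, for a scrambling family `sc` and a left inverse `Dinv1` of `𝒟_d`. -/
def gainCoef {Ω : Type*} [MeasurableSpace Ω] (μ : Measure Ω) (b d s m : ℕ)
    (sc : Ω → Fin (d * s) → List ℕ → Equiv.Perm (Fin b))
    (Dinv1 : ℝ → Fin d → ℝ) (P : Fin (b ^ m) → Fin s → ℝ) (k : Fin (d * s) → ℕ) : ℂ :=
  (b : ℂ) ^ (-(2 * m : ℤ)) * ∑ n : Fin (b ^ m), ∑ n' : Fin (b ^ m), ∏ i : Fin s,
    ∫ ω, (∏ r : Fin d, wal b (k (embIdx d s i r))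
            (scrambleR b (sc ω (embIdx d s i r)) (Dinv1 (P n i) r))) *
      (starRingEnd ℂ) (∏ r : Fin d, wal b (k (embIdx d s i r))
            (scrambleR b (sc ω (embIdx d s i r)) (Dinv1 (P n' i) r))) ∂μ

/-- The `b`-adic box `∏_i [a_i b^{-l_i}, (a_i+1) b^{-l_i})`. -/
def badicBox (b n : ℕ) (l a : Fin n → ℕ) : Set (Fin n → ℝ) :=
  Set.univ.pi fun i => Set.Ico ((a i : ℝ) / (b : ℝ) ^ l i) (((a i : ℝ) + 1) / (b : ℝ) ^ l i)

/-- A partition of `[0,1)^n` into `b`-adic boxes (each encoded by its pair `(l, a)`). -/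
def IsBadicPartition (b n : ℕ) (Part : Finset ((Fin n → ℕ) × (Fin n → ℕ))) : Prop :=
  (∀ p ∈ Part, ∀ i, 1 ≤ p.1 i ∧ p.2 i < b ^ p.1 i) ∧
    (∀ p ∈ Part, ∀ q ∈ Part, p ≠ q → Disjoint (badicBox b n p.1 p.2) (badicBox b n q.1 q.2)) ∧
    (⋃ p ∈ Part, badicBox b n p.1 p.2) = unitBox n

/-- The increment `z_{i,r} = τ b^{-α(l_i - 1) - r}` (with `r` one-indexed). -/
def zval (b α s : ℕ) (l : Fin (α * s) → ℕ) (τ : ℤ) (i r : ℕ) : ℝ :=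
  (τ : ℝ) * (b : ℝ) ^ (-(α : ℤ) * ((if h : i < α * s then (l ⟨i, h⟩ : ℤ) else 0) - 1) - ((r : ℤ) + 1))

/-- The inner supremum in the definition of the generalized Vitali variation. -/
def vitaliInner (b α s : ℕ) (αv : Fin s → ℕ) (f : (Fin s → ℝ) → ℝ)
    (l a : Fin (α * s) → ℕ) : ENNReal :=
  ⨆ (t : Fin s → ℝ) (τ : (i : Fin s) → Fin (αv i) → ℤ)
    (_ : t ∈ interlaceB b α s '' badicBox b (α * s) l a)
    (_ : ∀ i r, τ i r ≠ 0 ∧ 1 - (b : ℤ) ≤ τ i r ∧ τ i r ≤ (b : ℤ) - 1)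
    (_ : ∀ v : (i : Fin s) → Finset (Fin (αv i)),
      (fun i => t i + ∑ r ∈ v i, zval b α s l (τ i r) (i : ℕ) (r : ℕ)) ∈
        interlaceB b α s '' badicBox b (α * s) (fun i => l i - 1) (fun i => a i / b)),
    ENNReal.ofReal
      ((fdiffV s f αv t (fun i r => zval b α s l (τ i r) (i : ℕ) (r : ℕ)) /
        ∏ i, ∏ r : Fin (αv i), zval b α s l (τ i r) (i : ℕ) (r : ℕ)) ^ 2)

/-- The generalized Vitali variation `V^{(s)}_𝛂(f)`. -/
def vitaliVar (b α s : ℕ) (αv : Fin s → ℕ) (f : (Fin s → ℝ) → ℝ) : ENNReal :=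
  ⨆ (Part : Finset ((Fin (α * s) → ℕ) × (Fin (α * s) → ℕ))) (_ : IsBadicPartition b (α * s) Part),
    (∑ p ∈ Part, volume (interlaceB b α s '' badicBox b (α * s) p.1 p.2) *
      vitaliInner b α s αv f p.1 p.2) ^ (1 / 2 : ℝ)

/-- The marginal `f_u` of `f`, as a function of the coordinates in `u`
(listed in increasing order). -/
def marginal (s : ℕ) (u : Finset (Fin s)) (f : (Fin s → ℝ) → ℝ) (y : Fin u.card → ℝ) : ℝ :=
  ∫ x in unitBox s, f fun i => if h : i ∈ u then y ((u.orderIsoOfFin rfl).symm ⟨i, h⟩) else x i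

/-- The generalized Hardy–Krause variation `V_α(f)` of order `α`. -/
def hkVar (b α s : ℕ) (f : (Fin s → ℝ) → ℝ) : ENNReal :=
  (∑ u : Finset (Fin s),
    if u = ∅ then ENNReal.ofReal |∫ x in unitBox s, f x| ^ 2
    else ∑ αv ∈ Fintype.piFinset (fun _ : Fin u.card => Finset.Icc 1 α),
      vitaliVar b α u.card αv (marginal s u f) ^ 2) ^ (1 / 2 : ℝ)

/-- `K_i`: the indices of the `i`-th block where `ℓ` is positive. -/
def Kblock (d s : ℕ) (ℓ : Fin (d * s) → ℕ) (i : Fin s) : Finset (Fin (d * s)) :=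
  Finset.univ.filter fun j => 0 < ℓ j ∧ (j : ℕ) / d = (i : ℕ)

/-- `γ(ℓ) = ∏_i ∏_{j=1}^{α_i} γ_{i,j}`, the product over each block of the
`min(α,|K_i|)` smallest of the numbers `γ'_j = (b-1) b^{-j+(i-1)d-(l_j-1)d}`, `j ∈ K_i`. -/
def gammaEll (b d s α : ℕ) (ℓ : Fin (d * s) → ℕ) : ℝ :=
  ∏ i : Fin s,
    ((((Kblock d s ℓ i).image fun j : Fin (d * s) =>
        (b - 1 : ℝ) * (b : ℝ) ^ (-(((j : ℕ) % d : ℤ) + 1) - ((ℓ j : ℤ) - 1) * d)).sort (· ≤ ·)).take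
      (min α (Kblock d s ℓ i).card)).prod


/-!
For `x ∈ [0,1)^d`, the `(q d + r + 1)`-th base-`b` digit of `𝒟_d x` is the `(q + 1)`-th digit of
`x_r`; this uses that the digits of `x_0` are not eventually `b - 1`, a property inherited by the
interlaced digit sequence. A point lies in the elementary interval `[a b^{-k}, (a+1) b^{-k})` iff
its first `k` digits are those of `a`. Among the first `k` digits of `𝒟_d x`, exactly
`⌈(k - r)/d⌉` come from `x_r`, so `𝒟_d x` lies in a given elementary interval of level `k` iff
each `x_r` lies in a prescribed elementary interval of level `⌈(k - r)/d⌉`, and these levels sum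
to `k`. Hence the points of the interlaced net in an elementary box of `[0,1)^s` are exactly the
points of the original net in one elementary box of `[0,1)^{ds}` of the same volume.
-/

section NatDigits

variable {b : ℕ}

def ofDigitsMSB (b : ℕ) (c : ℕ → ℕ) : ℕ → ℕ
  | 0 => 0
  | k + 1 => b * ofDigitsMSB b c k + c k

lemma ofDigitsMSB_lt {c : ℕ → ℕ} {k : ℕ} (hc : ∀ p < k, c p < b) :
    ofDigitsMSB b c k < b ^ k := by
  induction k with
  | zero => simp [ofDigitsMSB]
  | succ k ih =>
    have h₁ := ih fun p hp => hc p (by omega)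
    have h₂ := hc k (by omega)
    calc b * ofDigitsMSB b c k + c k < b * ofDigitsMSB b c k + b := by omega
      _ = b * (ofDigitsMSB b c k + 1) := by ring
      _ ≤ b * b ^ k := Nat.mul_le_mul_left b h₁
      _ = b ^ (k + 1) := (pow_succ' b k).symm

lemma ofDigitsMSB_div_pow_mod {c : ℕ → ℕ} {k p : ℕ} (hc : ∀ q < k, c q < b) (hp : p < k) :
    ofDigitsMSB b c k / b ^ (k - 1 - p) % b = c p := by
  induction k generalizing p with
  | zero => omega
  | succ k ih =>
    have hb : 0 < b := (Nat.zero_le _).trans_lt (hc 0 (by omega))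
    rcases Nat.lt_or_ge p k with hpk | hpk
    · rw [show k + 1 - 1 - p = k - 1 - p + 1 by omega, pow_succ', ← Nat.div_div_eq_div_mul,
        ofDigitsMSB, Nat.mul_add_div hb, Nat.div_eq_of_lt (hc k (by omega)), add_zero]
      exact ih (fun q hq => hc q (by omega)) hpk
    · obtain rfl : p = k := by omega
      simp [ofDigitsMSB, Nat.mod_eq_of_lt (hc p (by omega))]

lemma mod_pow_eq_of_div_pow_mod_eq {M N k : ℕ} (h : ∀ j < k, M / b ^ j % b = N / b ^ j % b) :
    M % b ^ k = N % b ^ k := by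
  induction k with
  | zero => rw [pow_zero, Nat.mod_one, Nat.mod_one]
  | succ k ih =>
    rw [Nat.mod_pow_succ, Nat.mod_pow_succ, ih fun j hj => h j (by omega), h k (by omega)]

lemma eq_of_msb_digits_eq {M N k : ℕ} (hM : M < b ^ k) (hN : N < b ^ k)
    (h : ∀ p < k, M / b ^ (k - 1 - p) % b = N / b ^ (k - 1 - p) % b) : M = N := by
  have := mod_pow_eq_of_div_pow_mod_eq (b := b) (k := k) fun j hj => by
    simpa [show k - 1 - (k - 1 - j) = j by omega] using h (k - 1 - j) (by omega)
  rwa [Nat.mod_eq_of_lt hM, Nat.mod_eq_of_lt hN] at this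

end NatDigits

section RealDigits

variable {b : ℕ} {x : ℝ}

lemma bdigit_eq_floor_mod (x : ℝ) (i : ℕ) : bdigit b x i = ⌊x * (b : ℝ) ^ i⌋₊ % b := by
  rw [bdigit, Int.floor_toNat]

lemma bdigit_eq_floor_div_pow_mod (hb : 0 < b) {k p : ℕ} (hp : p < k) :
    bdigit b x (p + 1) = ⌊x * (b : ℝ) ^ k⌋₊ / b ^ (k - 1 - p) % b := by
  have hsplit : x * (b : ℝ) ^ (p + 1) = x * (b : ℝ) ^ k / ((b ^ (k - 1 - p) : ℕ) : ℝ) := by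
    rw [eq_div_iff (by positivity), Nat.cast_pow, mul_assoc, ← pow_add]
    congr 2
    omega
  rw [bdigit_eq_floor_mod, hsplit, Nat.floor_div_natCast]

lemma mem_Ico_iff_floor_eq (hb : 0 < b) (hx : 0 ≤ x) (k a : ℕ) :
    x ∈ Ico ((a : ℝ) / (b : ℝ) ^ k) (((a : ℝ) + 1) / (b : ℝ) ^ k) ↔
      ⌊x * (b : ℝ) ^ k⌋₊ = a := by
  have hbk : (0 : ℝ) < (b : ℝ) ^ k := by positivity
  rw [Nat.floor_eq_iff (by positivity), mem_Ico, div_le_iff₀ hbk, lt_div_iff₀ hbk]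

lemma mem_Ico_iff_bdigit_eq (hb : 0 < b) (hx : x ∈ Ico (0 : ℝ) 1) {k a : ℕ} (ha : a < b ^ k) :
    x ∈ Ico ((a : ℝ) / (b : ℝ) ^ k) (((a : ℝ) + 1) / (b : ℝ) ^ k) ↔
      ∀ p < k, bdigit b x (p + 1) = a / b ^ (k - 1 - p) % b := by
  have hfloor : ⌊x * (b : ℝ) ^ k⌋₊ < b ^ k := by
    rw [Nat.floor_lt (by have := hx.1; positivity)]
    push_cast
    nlinarith [hx.2, (by positivity : (0 : ℝ) < (b : ℝ) ^ k)]
  rw [mem_Ico_iff_floor_eq hb hx.1]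
  refine ⟨fun h p hp => by rw [bdigit_eq_floor_div_pow_mod hb hp, h], fun h => ?_⟩
  exact eq_of_msb_digits_eq hfloor ha fun p hp => by
    rw [← bdigit_eq_floor_div_pow_mod hb hp, h p hp]

end RealDigits

section Regroup

open Finset

variable {d : ℕ}

lemma mul_add_div_of_lt (q : ℕ) {r : ℕ} (hr : r < d) : (q * d + r) / d = q := by
  rw [mul_comm, Nat.mul_add_div (by omega), Nat.div_eq_of_lt hr, add_zero]

/-- `⌈(k - r) / d⌉`, the number of `p < k` with `p % d = r`. -/
def countResidue (d k r : ℕ) : ℕ := (k - r + d - 1) / d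

lemma mul_add_lt_iff_lt_countResidue {q r k : ℕ} (hr : r < d) :
    q * d + r < k ↔ q < countResidue d k r := by
  rw [countResidue]
  conv_rhs => rw [← Nat.add_one_le_iff, Nat.le_div_iff_mul_le (by omega), add_mul, one_mul]
  generalize q * d = A
  omega

lemma forall_lt_iff_forall_countResidue [NeZero d] {k : ℕ} {Q : ℕ → Prop} :
    (∀ p < k, Q p) ↔ ∀ r : Fin d, ∀ q < countResidue d k r, Q (q * d + r) := by
  refine ⟨fun h r q hq => h _ ((mul_add_lt_iff_lt_countResidue r.isLt).2 hq), fun h p hp => ?_⟩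
  have hp' : p / d * d + (Fin.ofNat d p : ℕ) = p := by rw [Fin.val_ofNat, Nat.div_add_mod']
  rw [← hp'] at hp ⊢
  exact h _ _ ((mul_add_lt_iff_lt_countResidue (Fin.isLt _)).1 hp)

lemma sum_countResidue [NeZero d] (k : ℕ) : ∑ r : Fin d, countResidue d k r = k := by
  have hfiber (r : Fin d) : #{p ∈ range k | Fin.ofNat d p = r} = countResidue d k r := by
    rw [← card_range (countResidue d k r)]
    refine card_nbij' (· / d) (fun q => q * d + r) (fun p hp => ?_) (fun q hq => ?_)
      (fun p hp => ?_) (fun q _ => mul_add_div_of_lt q r.isLt)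
    all_goals simp only [coe_filter, coe_range, Set.mem_Iio, Set.mem_ofPred_eq,
      Finset.mem_range] at *
    · rw [← mul_add_lt_iff_lt_countResidue r.isLt, ← hp.2, Fin.val_ofNat, Nat.div_add_mod']
      exact hp.1
    · refine ⟨(mul_add_lt_iff_lt_countResidue r.isLt).2 hq, Fin.ext ?_⟩
      rw [Fin.val_ofNat, Nat.mul_add_mod_self_right, Nat.mod_eq_of_lt r.isLt]
    · rw [← hp.2, Fin.val_ofNat, Nat.div_add_mod']
  calc ∑ r : Fin d, countResidue d k r = ∑ r : Fin d, #{p ∈ range k | Fin.ofNat d p = r} :=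
        (sum_congr rfl fun r _ => hfiber r).symm
    _ = k := by rw [← card_eq_sum_card_fiberwise fun p _ => mem_univ _, card_range]

end Regroup

section OfDigits

open Filter Real

variable {b : ℕ}

lemma val_digits [NeZero b] (x : ℝ) (i : ℕ) :
    (Real.digits x b i : ℕ) = bdigit b x (i + 1) := by
  rw [Real.digits, Fin.val_ofNat, bdigit_eq_floor_mod]

lemma ofDigits_shift_mul (a : ℕ → Fin b) (k : ℕ) :
    ofDigits (fun i => a (i + k)) * b = a k + ofDigits (fun i => a (i + (k + 1))) := by
  have hb : (b : ℝ) ≠ 0 := by have := Fin.pos (a 0); positivity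
  rw [ofDigits_eq_sum_add_ofDigits _ 1]
  simp only [Finset.sum_range_one, ofDigitsTerm, zero_add, pow_one, add_assoc, add_comm 1 k]
  field_simp

lemma exists_ofDigits_mul_pow_eq (a : ℕ → Fin b) (k : ℕ) :
    ∃ M : ℕ, ofDigits a * (b : ℝ) ^ k = M + ofDigits (fun i => a (i + k)) := by
  induction k with
  | zero => exact ⟨0, by simp⟩
  | succ k ih =>
    obtain ⟨M, hM⟩ := ih
    refine ⟨b * M + a k, ?_⟩
    rw [pow_succ, ← mul_assoc, hM, add_mul, ofDigits_shift_mul]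
    push_cast
    ring

lemma ofDigits_lt_one (hb : 1 < b) {a : ℕ → Fin b} {i : ℕ} (hi : (a i : ℕ) ≠ b - 1) :
    ofDigits a < 1 := by
  have hlast : ((b - 1 : ℕ) : ℝ) = (b : ℝ) - 1 := by push_cast [Nat.cast_sub hb.le]; ring
  rw [← ofDigits_const_last_eq_one' hb]
  refine Summable.tsum_lt_tsum (i := i) (fun n => ?_) ?_ summable_ofDigitsTerm
    summable_ofDigitsTerm
  · simpa only [ofDigitsTerm, hlast] using ofDigitsTerm_le
  · have : (a i : ℕ) < b - 1 := by have := (a i).isLt; omega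
    simp only [ofDigitsTerm]
    gcongr

lemma bdigit_ofDigits (hb : 1 < b) {a : ℕ → Fin b} (ha : ∃ᶠ i in atTop, (a i : ℕ) ≠ b - 1)
    (k : ℕ) : bdigit b (ofDigits a) (k + 1) = a k := by
  obtain ⟨M, hM⟩ := exists_ofDigits_mul_pow_eq a k
  obtain ⟨i, hik, hi⟩ := frequently_atTop.1 ha (k + 1)
  have htail : ofDigits (fun j => a (j + (k + 1))) < 1 :=
    ofDigits_lt_one hb (i := i - (k + 1)) (by rwa [Nat.sub_add_cancel hik])
  have hfloor : ⌊ofDigits a * (b : ℝ) ^ (k + 1)⌋₊ = b * M + a k := by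
    rw [Nat.floor_eq_iff (by have := ofDigits_nonneg a; positivity), pow_succ, ← mul_assoc, hM,
      add_mul, ofDigits_shift_mul]
    push_cast
    constructor <;> nlinarith [ofDigits_nonneg (fun j => a (j + (k + 1)))]
  rw [bdigit_eq_floor_mod, hfloor, Nat.mul_add_mod, Nat.mod_eq_of_lt (a k).isLt]

lemma frequently_bdigit_ne (hb : 1 < b) {x : ℝ} (hx : x ∈ Ico (0 : ℝ) 1) :
    ∃ᶠ i in atTop, bdigit b x (i + 1) ≠ b - 1 := by
  have : NeZero b := ⟨by omega⟩
  refine frequently_atTop.2 fun k => ?_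
  by_contra! h
  -- digits that are eventually `b - 1` would make `x * b ^ k` an integer, whose next digit is `0`
  have htail : (fun i => Real.digits x b (i + k)) = fun _ => ⟨b - 1, Nat.sub_one_lt_of_lt hb⟩ :=
    funext fun i => Fin.ext (by rw [val_digits]; exact h (i + k) (by omega))
  obtain ⟨M, hM⟩ := exists_ofDigits_mul_pow_eq (Real.digits x b) k
  rw [ofDigits_digits hb hx, htail, ofDigits_const_last_eq_one' hb] at hM
  have hk := h k le_rfl
  rw [bdigit_eq_floor_mod, pow_succ, ← mul_assoc, hM,
    show ((M : ℝ) + 1) * b = ((M + 1) * b : ℕ) by push_cast; ring, Nat.floor_natCast,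
    Nat.mul_mod_left] at hk
  omega

end OfDigits

section Interlace

open Filter Real

variable {b d : ℕ}

def interlacedDigits (b d : ℕ) [NeZero b] [NeZero d] (x : Fin d → ℝ) (p : ℕ) : Fin b :=
  Real.digits (x (Fin.ofNat d p)) b (p / d)

lemma interlacedDigits_mul_add [NeZero b] [NeZero d] (x : Fin d → ℝ) (q : ℕ) (r : Fin d) :
    (interlacedDigits b d x (q * d + r) : ℕ) = bdigit b (x r) (q + 1) := by
  have hr : Fin.ofNat d (q * d + r) = r := Fin.ext (by simp [Nat.mod_eq_of_lt r.isLt])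
  rw [interlacedDigits, val_digits, hr, mul_add_div_of_lt q r.isLt]

lemma interlaceR_eq_ofDigits [NeZero b] [NeZero d] (x : Fin d → ℝ) :
    interlaceR b d x = ofDigits (interlacedDigits b d x) := by
  have hsum :
      Summable fun p => ofDigitsTerm (interlacedDigits b d x) ((Nat.divModEquiv d).symm p) :=
    (Nat.divModEquiv d).symm.summable_iff.2 summable_ofDigitsTerm
  rw [ofDigits, ← (Nat.divModEquiv d).symm.tsum_eq, hsum.tsum_prod, interlaceR]
  refine tsum_congr fun q => ?_
  rw [tsum_fintype]
  refine Finset.sum_congr rfl fun r _ => ?_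
  rw [Nat.divModEquiv_symm_apply, ofDigitsTerm, interlacedDigits_mul_add, div_eq_mul_inv]
  ring_nf

lemma frequently_interlacedDigits_ne [NeZero b] [NeZero d] (hb : 1 < b) {x : Fin d → ℝ}
    (hx : ∀ r, x r ∈ Ico (0 : ℝ) 1) :
    ∃ᶠ p in atTop, (interlacedDigits b d x p : ℕ) ≠ b - 1 := by
  refine frequently_atTop.2 fun k => ?_
  obtain ⟨q, hkq, hq⟩ := frequently_atTop.1 (frequently_bdigit_ne hb (hx 0)) k
  refine ⟨q * d + (0 : Fin d), ?_, ?_⟩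
  · simpa using Nat.le_mul_of_pos_right q (NeZero.pos d) |>.trans' hkq
  · rwa [interlacedDigits_mul_add]

lemma interlaceR_mem_Ico (hb : 1 < b) [NeZero d] {x : Fin d → ℝ}
    (hx : ∀ r, x r ∈ Ico (0 : ℝ) 1) :
    interlaceR b d x ∈ Ico (0 : ℝ) 1 := by
  have : NeZero b := ⟨by omega⟩
  obtain ⟨i, -, hi⟩ := frequently_atTop.1 (frequently_interlacedDigits_ne hb hx) 0
  rw [interlaceR_eq_ofDigits]
  exact ⟨ofDigits_nonneg _, ofDigits_lt_one hb hi⟩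

lemma bdigit_interlaceR (hb : 1 < b) [NeZero d] {x : Fin d → ℝ}
    (hx : ∀ r, x r ∈ Ico (0 : ℝ) 1) (q : ℕ) (r : Fin d) :
    bdigit b (interlaceR b d x) (q * d + r + 1) = bdigit b (x r) (q + 1) := by
  have : NeZero b := ⟨by omega⟩
  rw [interlaceR_eq_ofDigits, bdigit_ofDigits hb (frequently_interlacedDigits_ne hb hx),
    interlacedDigits_mul_add]

end Interlace

section Net

variable {b d : ℕ}

/-- The digits of `coordIndex b d k a r` are the digits of `a` at the positions `≡ r (mod d)`. -/
def coordIndex (b d k a : ℕ) (r : Fin d) : ℕ :=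
  ofDigitsMSB b (fun q => a / b ^ (k - 1 - (q * d + r)) % b) (countResidue d k r)

lemma coordIndex_lt (hb : 0 < b) (k a : ℕ) (r : Fin d) :
    coordIndex b d k a r < b ^ countResidue d k r :=
  ofDigitsMSB_lt fun _ _ => Nat.mod_lt _ hb

lemma interlaceR_mem_Ico_iff (hb : 1 < b) [NeZero d] {x : Fin d → ℝ}
    (hx : ∀ r, x r ∈ Ico (0 : ℝ) 1) {k a : ℕ} (ha : a < b ^ k) :
    interlaceR b d x ∈ Ico ((a : ℝ) / (b : ℝ) ^ k) (((a : ℝ) + 1) / (b : ℝ) ^ k) ↔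
      ∀ r, x r ∈ Ico ((coordIndex b d k a r : ℝ) / (b : ℝ) ^ countResidue d k r)
        (((coordIndex b d k a r : ℝ) + 1) / (b : ℝ) ^ countResidue d k r) := by
  have hb₀ : 0 < b := by omega
  rw [mem_Ico_iff_bdigit_eq hb₀ (interlaceR_mem_Ico hb hx) ha,
    forall_lt_iff_forall_countResidue (d := d)]
  refine forall_congr' fun r => ?_
  rw [mem_Ico_iff_bdigit_eq hb₀ (hx r) (coordIndex_lt hb₀ k a r)]
  refine forall₂_congr fun q hq => ?_
  rw [bdigit_interlaceR hb hx, coordIndex,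
    ofDigitsMSB_div_pow_mod (fun _ _ => Nat.mod_lt _ hb₀) hq]

def blockEquiv (d s : ℕ) : Fin s × Fin d ≃ Fin (d * s) :=
  finProdFinEquiv.trans (finCongr (mul_comm s d))

lemma blockEquiv_apply {s : ℕ} (i : Fin s) (r : Fin d) : blockEquiv d s (i, r) = embIdx d s i r :=
  Fin.ext (by simp [blockEquiv, embIdx, mul_comm, add_comm])

def pullbackLevel (d s : ℕ) (dv : Fin s → ℕ) (j : Fin (d * s)) : ℕ :=
  countResidue d (dv ((blockEquiv d s).symm j).1) ((blockEquiv d s).symm j).2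

def pullbackIndex (b d s : ℕ) (dv av : Fin s → ℕ) (j : Fin (d * s)) : ℕ :=
  coordIndex b d (dv ((blockEquiv d s).symm j).1) (av ((blockEquiv d s).symm j).1)
    ((blockEquiv d s).symm j).2

lemma sum_pullbackLevel [NeZero d] {s : ℕ} (dv : Fin s → ℕ) :
    ∑ j, pullbackLevel d s dv j = ∑ i, dv i := by
  rw [← (blockEquiv d s).sum_comp]
  simp [pullbackLevel, Fintype.sum_prod_type, sum_countResidue]

lemma pullbackIndex_lt {s : ℕ} (dv av : Fin s → ℕ) (hb : 0 < b) (j : Fin (d * s)) :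
    pullbackIndex b d s dv av j < b ^ pullbackLevel d s dv j :=
  coordIndex_lt hb _ _ _

lemma forall_interlaceB_mem_Ico_iff (hb : 1 < b) [NeZero d] {s : ℕ} {x : Fin (d * s) → ℝ}
    (hx : ∀ j, x j ∈ Ico (0 : ℝ) 1) {dv av : Fin s → ℕ} (hav : ∀ i, av i < b ^ dv i) :
    (∀ i, interlaceB b d s x i ∈
        Ico ((av i : ℝ) / (b : ℝ) ^ dv i) (((av i : ℝ) + 1) / (b : ℝ) ^ dv i)) ↔
      ∀ j, x j ∈ Ico ((pullbackIndex b d s dv av j : ℝ) / (b : ℝ) ^ pullbackLevel d s dv j)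
        (((pullbackIndex b d s dv av j : ℝ) + 1) / (b : ℝ) ^ pullbackLevel d s dv j) := by
  rw [← (blockEquiv d s).forall_congr_right]
  simp only [Prod.forall, Equiv.symm_apply_apply, pullbackIndex, pullbackLevel, blockEquiv_apply]
  exact forall_congr' fun i => interlaceR_mem_Ico_iff hb (fun r => hx _) (hav i)

end Net

theorem statement7_general (b d s m t : ℕ) (hb : 2 ≤ b) (hd : 1 ≤ d)
    (P : Fin (b ^ m) → Fin (d * s) → ℝ) (hP : ∀ n, P n ∈ unitBox (d * s))
    (hnet : IsNet b m (d * s) t P) :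
    IsNet b m s t fun n => interlaceB b d s (P n) := by
  have : NeZero d := ⟨by omega⟩
  intro dv hdv av hav
  have hmem (n : Fin (b ^ m)) :=
    forall_interlaceB_mem_Ico_iff hb (fun j => hP n j (mem_univ j)) hav
  have hlevel : ∑ j, pullbackLevel d s dv j = ∑ i, dv i := sum_pullbackLevel dv
  rw [Finset.filter_congr fun n _ => hmem n,
    hnet _ (hlevel ▸ hdv) _ (pullbackIndex_lt dv av (by omega)), hlevel]

/-- interlacing a `(t,m,ds)`-net gives a `(t,m,s)`-net. -/
theorem statement7 (b d s m t : ℕ) (hb : 2 ≤ b) (hd : 1 ≤ d) (hs : 1 ≤ s) (ht : t ≤ m)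
    (P : Fin (b ^ m) → Fin (d * s) → ℝ) (hP : ∀ n, P n ∈ unitBox (d * s))
    (hnet : IsNet b m (d * s) t P) :
    IsNet b m s t fun n => interlaceB b d s (P n) :=
  statement7_general b d s m t hb hd P hP hnet

end Paper
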